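/- Let W_1,…,W_N be M×M skew-symmetric matrices supported on mutually disjoint index blocks with ‖W_t‖_op ≤ 1 for each t, and let X be an M×2N matrix with ‖X‖_op ≤ L. Then for every sign vector b ∈ {±1}^N, |pf(Xᵀ(∑_{t=1}^N b_t W_t)X)| ≤ L^{2N}. -/

import Mathlib

open scoped BigOperators
open Matrix

noncomputable section

/-- The Pfaffian of a `2N × 2N` matrix, via the permutation-sum formula. -/
noncomputable def pfaffian (N : ℕ) (A : Matrix (Fin (2 * N)) (Fin (2 * N)) ℂ) : ℂ :=
  (1 / (2 ^ N * (N.factorial : ℂ))) *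
    ∑ σ : Equiv.Perm (Fin (2 * N)), (Equiv.Perm.sign σ : ℤ) *
      ∏ i : Fin N, A (σ ⟨2 * (i : ℕ), by omega⟩) (σ ⟨2 * (i : ℕ) + 1, by omega⟩)

/-- The ℓ²→ℓ² operator norm of a (possibly rectangular) complex matrix. -/
noncomputable def opNorm {m n : Type*} [Fintype m] [Fintype n] [DecidableEq n]
    (A : Matrix m n ℂ) : ℝ :=
  ‖LinearMap.toContinuousLinearMap (Matrix.toEuclideanLin A)‖

/-- `W` is supported on the index block `S`: all entries outside `S × S` vanish. -/
def SupportedOn {M : ℕ} (S : Finset (Fin M)) (W : Matrix (Fin M) (Fin M) ℂ) : Prop :=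
  ∀ i j, (i ∉ S ∨ j ∉ S) → W i j = 0

/-!
Write `A = Xᵀ B X` with `B = ∑ b_t W_t`. Since `A` is skew-symmetric, `pf(A)² = det A`, and
`|det A| ≤ ‖A‖^{2N}` because every eigenvalue of `A` is bounded by `‖A‖`. The blocks of `B` act
on mutually orthogonal coordinate subspaces, so `‖B‖ ≤ max_t ‖W_t‖ ≤ 1`, whence
`‖A‖ ≤ ‖Xᵀ‖ ‖B‖ ‖X‖ ≤ L²`.

For `pf(A)² = det A`, an invertible skew-symmetric matrix is congruent, by symplectic Gaussian
elimination, to the block-diagonal matrix `J` with blocks `!![0, 1; -1, 0]`; the Pfaffian sum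
transforms by `det U` under `A ↦ Uᵀ A U`, and for `J` it counts the `2ᴺ N!` permutations that
preserve the pairing `{2i, 2i + 1}`, each with weight one. A singular skew-symmetric matrix is
congruent to one with a zero column, so its Pfaffian vanishes.
-/

open Equiv Finset Function

theorem Fintype.sum_fun_eq_sum_perm {α M : Type*} [Fintype α] [DecidableEq α] [AddCommMonoid M]
    (f : (α → α) → M) (hf : ∀ G, ¬ Injective G → f G = 0) :
    ∑ G, f G = ∑ σ : Perm α, f σ := by
  rw [← Finset.sum_image (s := univ) (g := fun σ : Perm α => (σ : α → α))
    fun _ _ _ _ h => Equiv.coe_fn_injective h]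
  refine (Finset.sum_subset (subset_univ _) fun G _ hG => hf G fun hinj => hG ?_).symm
  exact mem_image.2 ⟨.ofBijective G hinj.bijective_of_finite, mem_univ _, rfl⟩

namespace Matrix

section CommRing

variable {m n R : Type*} [CommRing R]

theorem submatrix_transpose_eq_neg {A : Matrix n n R} (hA : Aᵀ = -A) (e : m → n) :
    (A.submatrix e e)ᵀ = -A.submatrix e e := by
  rw [transpose_submatrix, hA]
  rfl

variable [Fintype n]

theorem transpose_mul_mul_eq_neg {A : Matrix n n R} (hA : Aᵀ = -A) (U : Matrix n m R) :
    (Uᵀ * A * U)ᵀ = -(Uᵀ * A * U) := by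
  simp [transpose_mul, hA, Matrix.mul_assoc]

variable [DecidableEq n]

def Congruent (A B : Matrix n n R) : Prop :=
  ∃ U : Matrix n n R, IsUnit U.det ∧ Uᵀ * A * U = B

namespace Congruent

theorem refl (A : Matrix n n R) : Congruent A A :=
  ⟨1, by simp, by simp⟩

theorem trans {A B C : Matrix n n R} (hAB : Congruent A B) (hBC : Congruent B C) :
    Congruent A C := by
  obtain ⟨U, hU, rfl⟩ := hAB
  obtain ⟨V, hV, rfl⟩ := hBC
  exact ⟨U * V, by simpa [det_mul] using hU.mul hV, by simp [transpose_mul, Matrix.mul_assoc]⟩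

theorem submatrix [Fintype m] [DecidableEq m] {A B : Matrix n n R} (h : Congruent A B)
    (e : m ≃ n) : Congruent (A.submatrix e e) (B.submatrix e e) := by
  obtain ⟨U, hU, rfl⟩ := h
  refine ⟨U.submatrix e e, by simpa [det_submatrix_equiv_self] using hU, ?_⟩
  rw [transpose_submatrix, submatrix_mul_equiv, submatrix_mul_equiv]

theorem fromBlocks_zero [Fintype m] [DecidableEq m] {A : Matrix m m R} {D D' : Matrix n n R}
    (h : Congruent D D') : Congruent (fromBlocks A 0 0 D) (fromBlocks A 0 0 D') := by
  obtain ⟨U, hU, rfl⟩ := h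
  exact ⟨fromBlocks 1 0 0 U, by simpa [det_fromBlocks_zero₂₁] using hU,
    by simp [fromBlocks_transpose, fromBlocks_multiply]⟩

theorem transpose_eq_neg {A B : Matrix n n R} (h : Congruent A B) (hA : Aᵀ = -A) : Bᵀ = -B := by
  obtain ⟨U, -, rfl⟩ := h
  exact transpose_mul_mul_eq_neg hA U

theorem isUnit_det {A B : Matrix n n R} (h : Congruent A B) (hA : IsUnit A.det) :
    IsUnit B.det := by
  obtain ⟨U, hU, rfl⟩ := h
  simpa [det_mul] using (hU.mul hA).mul hU

end Congruent

theorem congruent_of_submatrix [Fintype m] [DecidableEq m] {A B : Matrix n n R} (e : m ≃ n)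
    (h : Congruent (A.submatrix e e) (B.submatrix e e)) : Congruent A B := by
  simpa [submatrix_submatrix] using h.submatrix e.symm

theorem congruent_submatrix_perm (A : Matrix n n R) (π : Perm n) :
    Congruent A (A.submatrix π π) := by
  refine ⟨(1 : Matrix n n R).submatrix id π, ?_, ?_⟩
  · rw [det_permute', det_one, mul_one]
    rcases Int.units_eq_one_or (Perm.sign π) with h | h <;> simp [h]
  · ext i j
    simp [mul_apply, one_apply]

end CommRing

section Pairs

variable {ι R : Type*} [DecidableEq ι] [CommRing R]

variable (R) in
def J₂ : Matrix (Fin 2) (Fin 2) R :=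
  !![0, 1; -1, 0]

variable (ι R) in
def pairJ : Matrix (ι × Fin 2) (ι × Fin 2) R :=
  of fun p q => if p.1 = q.1 then J₂ R p.2 q.2 else 0

theorem J₂_mul_J₂ : J₂ R * J₂ R = -1 := by
  ext i j
  fin_cases i <;> fin_cases j <;> simp [J₂]

theorem J₂_transpose : (J₂ R)ᵀ = -J₂ R := by
  ext i j
  fin_cases i <;> fin_cases j <;> simp [J₂]

theorem det_J₂ : (J₂ R).det = 1 := by
  simp [J₂]

theorem J₂_apply_perm (s : Perm (Fin 2)) : J₂ R (s 0) (s 1) = (Perm.sign s : ℤ) := by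
  obtain rfl | rfl : s = 1 ∨ s = Equiv.swap 0 1 := by revert s; decide
  all_goals simp [J₂]

variable (ι) in
theorem det_pairJ [Fintype ι] : (pairJ ι R).det = 1 := by
  have : pairJ ι R = (blockDiagonal fun _ : ι => J₂ R).submatrix (prodComm _ _) (prodComm _ _) := by
    ext p q
    simp [pairJ, blockDiagonal_apply]
  rw [this, det_submatrix_equiv_self, det_blockDiagonal]
  simp [det_J₂]

theorem pairJ_submatrix_prodCongr {κ : Type*} [DecidableEq κ] (e : κ ≃ ι) :
    (pairJ ι R).submatrix (prodCongr e (.refl _)) (prodCongr e (.refl _)) = pairJ κ R := by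
  ext p q
  simp [pairJ]

theorem pairJ_option_submatrix {κ : Type*} [DecidableEq κ] [DecidableEq (Option κ)] :
    (pairJ (Option κ) R).submatrix optionProdEquiv.symm optionProdEquiv.symm =
      fromBlocks (J₂ R) 0 0 (pairJ κ R) := by
  ext (a | ⟨i, a⟩) (b | ⟨j, b⟩) <;> simp [pairJ]

theorem congruent_fromBlocks_J₂ {n : Type*} [Fintype n] [DecidableEq n] (C : Matrix (Fin 2) n R)
    (D : Matrix n n R) :
    Congruent (fromBlocks (J₂ R) C (-Cᵀ) D) (fromBlocks (J₂ R) 0 0 (D - Cᵀ * J₂ R * C)) := by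
  refine ⟨fromBlocks 1 (J₂ R * C) 0 1, by simp, ?_⟩
  simp only [fromBlocks_transpose, fromBlocks_multiply, transpose_mul, J₂_transpose]
  congr 1 <;>
    simp [← Matrix.mul_assoc, Matrix.mul_assoc _ (J₂ R) (J₂ R), J₂_mul_J₂, sub_eq_neg_add]

end Pairs

section Pfaffian

variable {ι R : Type*} [Fintype ι] [DecidableEq ι] [CommRing R]

/-- The Pfaffian without its normalising factor `1 / (2ⁿ n!)`, for rows and columns indexed by
pairs `(i, 0), (i, 1)`. -/
def pfSum (A : Matrix (ι × Fin 2) (ι × Fin 2) R) : R :=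
  ∑ σ : Perm (ι × Fin 2), (Perm.sign σ : ℤ) * ∏ i, A (σ (i, 0)) (σ (i, 1))

theorem pfSum_transpose_mul_mul (U A : Matrix (ι × Fin 2) (ι × Fin 2) R) :
    pfSum (Uᵀ * A * U) = U.det * pfSum A := by
  have entry : ∀ a b, (Uᵀ * A * U) a b = ∑ kl : (ι × Fin 2) × (ι × Fin 2),
      U kl.1 a * A kl.1 kl.2 * U kl.2 b := fun a b => by
    simp_rw [mul_apply, transpose_apply, sum_mul]
    rw [sum_comm, ← Fintype.sum_prod_type']
  let e : (ι × Fin 2 → ι × Fin 2) ≃ (ι → (ι × Fin 2) × (ι × Fin 2)) :=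
    (Equiv.curry _ _ _).trans (piCongrRight fun _ => piFinTwoEquiv fun _ => _)
  calc pfSum (Uᵀ * A * U)
      = ∑ G : ι × Fin 2 → ι × Fin 2, ∑ σ : Perm (ι × Fin 2), (Perm.sign σ : ℤ) *
          ∏ i, (U (G (i, 0)) (σ (i, 0)) * A (G (i, 0)) (G (i, 1)) * U (G (i, 1)) (σ (i, 1))) := by
        simp only [pfSum, entry, Fintype.prod_sum, mul_sum]
        rw [sum_comm]
        exact (Fintype.sum_equiv e _ _ fun _ => rfl).symm
    _ = ∑ G : ι × Fin 2 → ι × Fin 2, (∏ i, A (G (i, 0)) (G (i, 1))) * (U.submatrix G id).det := by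
        refine sum_congr rfl fun G _ => ?_
        rw [← det_transpose, det_apply', mul_sum]
        refine sum_congr rfl fun σ _ => ?_
        simp only [transpose_apply, submatrix_apply, id, Fintype.prod_prod_type, Fin.prod_univ_two,
          prod_mul_distrib]
        ring
    _ = ∑ τ : Perm (ι × Fin 2), (∏ i, A (τ (i, 0)) (τ (i, 1))) * (U.submatrix τ id).det :=
        Fintype.sum_fun_eq_sum_perm _ fun G hG => by
          obtain ⟨p, q, hpq, hne⟩ := not_injective_iff.1 hG
          rw [det_zero_of_row_eq hne (by ext; simp [hpq]), mul_zero]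
    _ = U.det * pfSum A := by
        simp only [det_permute, pfSum, mul_sum]
        exact sum_congr rfl fun _ _ => by ring

theorem pfSum_eq_zero_of_col_eq_zero {A : Matrix (ι × Fin 2) (ι × Fin 2) R} (hA : Aᵀ = -A)
    (k : ι × Fin 2) (hk : ∀ i, A i k = 0) : pfSum A = 0 := by
  have hrow : ∀ j, A k j = 0 := fun j => by simpa [hk] using congr_fun (congr_fun hA j) k
  refine sum_eq_zero fun σ _ => mul_eq_zero_of_right _ ?_
  obtain ⟨⟨i, a⟩, hσ⟩ := σ.surjective k
  refine prod_eq_zero (mem_univ i) ?_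
  match a, hσ with
  | 0, hσ => rw [hσ]; exact hrow _
  | 1, hσ => rw [hσ]; exact hk _

theorem pfSum_eq_zero_of_det_eq_zero [IsDomain R] {A : Matrix (ι × Fin 2) (ι × Fin 2) R}
    (hA : Aᵀ = -A) (h : A.det = 0) : pfSum A = 0 := by
  obtain ⟨v, hv, hAv⟩ := exists_mulVec_eq_zero_iff.2 h
  obtain ⟨k, hk⟩ := ne_iff.1 hv
  let U := (1 : Matrix (ι × Fin 2) (ι × Fin 2) R).updateCol k v
  have hU : U.det = v k := by simpa [one_apply] using det_updateCol_sum 1 k v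
  have hcol : ∀ i, (Uᵀ * A * U) i k = 0 := fun i => by
    have : (Uᵀ * A * U) i k = ((Uᵀ * A) *ᵥ v) i := by simp [U, mul_apply, mulVec, dotProduct]
    rw [this, ← mulVec_mulVec, hAv, mulVec_zero, Pi.zero_apply]
  have := pfSum_transpose_mul_mul U A
  rw [pfSum_eq_zero_of_col_eq_zero (transpose_mul_mul_eq_neg hA U) k hcol, hU] at this
  exact (mul_eq_zero.1 this.symm).resolve_left hk

theorem sign_prodShear (g : Perm ι) (s : ι → Perm (Fin 2)) :
    Perm.sign (prodShear g s) = ∏ i, Perm.sign (s i) := by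
  have : prodShear g s = prodCongrLeft (fun _ => g) * prodCongrRight s := rfl
  rw [this, Perm.sign_mul, Perm.sign_prodCongrLeft, Perm.sign_prodCongrRight, Fin.prod_univ_two,
    Int.units_mul_self, one_mul]

theorem exists_prodShear_eq {σ : Perm (ι × Fin 2)} (h : ∀ i, (σ (i, 0)).1 = (σ (i, 1)).1) :
    ∃ (g : Perm ι) (s : ι → Perm (Fin 2)), prodShear g s = σ := by
  have hfst : ∀ i a, (σ (i, a)).1 = (σ (i, 0)).1 := fun i a => by
    match a with
    | 0 => rfl
    | 1 => exact (h i).symm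
  have hsnd : ∀ {p q}, p ≠ q → (σ p).1 = (σ q).1 → (σ p).2 ≠ (σ q).2 := fun hpq h1 h2 =>
    hpq (σ.injective (Prod.ext h1 h2))
  have hg : Injective fun i => (σ (i, 0)).1 := by
    intro i j hij
    by_contra hne
    have h01 := hsnd (p := (i, 0)) (q := (i, 1)) (by simp) (h i)
    have h0j := hsnd (p := (i, 0)) (q := (j, 0)) (by simp [hne]) hij
    have h1j := hsnd (p := (i, 1)) (q := (j, 0)) (by simp [hne]) ((h i).symm.trans hij)
    omega
  refine ⟨.ofBijective _ hg.bijective_of_finite, fun i => .ofBijective (fun a => (σ (i, a)).2)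
    (Finite.injective_iff_bijective.1 fun a b hab => ?_), ?_⟩
  · by_contra hne
    exact hsnd (by simpa using hne) ((hfst i a).trans (hfst i b).symm) hab
  · ext ⟨i, a⟩ <;> simp [hfst]

theorem pfSum_pairJ : pfSum (pairJ ι R) = 2 ^ Fintype.card ι * (Fintype.card ι).factorial := by
  have hinj : Injective fun x : Perm ι × (ι → Perm (Fin 2)) => prodShear x.1 x.2 := by
    rintro ⟨g, s⟩ ⟨g', s'⟩ h
    have h' := fun p => congr_fun (congr_arg DFunLike.coe h) p
    simp only [Prod.mk.injEq]
    exact ⟨Equiv.ext fun i => congr_arg Prod.fst (h' (i, 0)),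
      funext fun i => Equiv.ext fun a => congr_arg Prod.snd (h' (i, a))⟩
  rw [pfSum, ← Fintype.sum_of_injective _ hinj (fun _ => (1 : R))]
  · simp [Fintype.card_perm, mul_comm]
  · intro σ hσ
    obtain ⟨i, hi⟩ : ∃ i, (σ (i, 0)).1 ≠ (σ (i, 1)).1 := by
      by_contra! h
      obtain ⟨g, s, rfl⟩ := exists_prodShear_eq h
      exact hσ ⟨(g, s), rfl⟩
    exact mul_eq_zero_of_right _ (prod_eq_zero (mem_univ i) (by simp [pairJ, hi]))
  · rintro ⟨g, s⟩
    simp only [sign_prodShear, pairJ, of_apply, prodShear_apply, if_true, J₂_apply_perm]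
    push_cast
    rw [← prod_mul_distrib, eq_comm]
    refine prod_eq_one fun i _ => ?_
    rw [← Int.cast_mul, ← Units.val_mul, Int.units_mul_self, Units.val_one, Int.cast_one]

end Pfaffian

section Field

variable {K : Type*} [Field K] [NeZero (2 : K)]

theorem apply_self_eq_zero_of_transpose_eq_neg {n : Type*} {A : Matrix n n K} (hA : Aᵀ = -A)
    (i : n) : A i i = 0 := by
  have h : A i i = -A i i := congr_fun (congr_fun hA i) i
  have : (2 : K) * A i i = 0 := by linear_combination h
  exact (mul_eq_zero.1 this).resolve_left two_ne_zero

theorem eq_fromBlocks_J₂ {n : Type*} {B : Matrix (Fin 2 ⊕ n) (Fin 2 ⊕ n) K} (hB : Bᵀ = -B)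
    (h : B (.inl 0) (.inl 1) = 1) :
    B = fromBlocks (J₂ K) B.toBlocks₁₂ (-B.toBlocks₁₂ᵀ) B.toBlocks₂₂ := by
  have hskew : ∀ i j, B j i = -B i j := fun i j => congr_fun (congr_fun hB i) j
  conv_lhs => rw [← fromBlocks_toBlocks B]
  congr 1
  · ext i j
    fin_cases i <;> fin_cases j <;>
      simp [toBlocks₁₁, J₂, h, hskew (.inl 0) (.inl 1), apply_self_eq_zero_of_transpose_eq_neg hB]
  · ext i j
    simp [toBlocks₂₁, toBlocks₁₂, hskew (.inl j) (.inr i)]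

variable {n : Type*} [Fintype n] [DecidableEq n]

theorem exists_congruent_apply_eq_one {A : Matrix (Fin 2 ⊕ n) (Fin 2 ⊕ n) K} (hA : Aᵀ = -A)
    (hdet : IsUnit A.det) : ∃ B, Congruent A B ∧ B (.inl 0) (.inl 1) = 1 := by
  obtain ⟨k, hk⟩ : ∃ k, A (.inl 0) k ≠ 0 := by
    by_contra! h
    exact hdet.ne_zero (det_eq_zero_of_row_eq_zero _ h)
  have hk0 : k ≠ .inl 0 := fun h => hk (h ▸ apply_self_eq_zero_of_transpose_eq_neg hA _)
  let π := Equiv.swap (.inl 1 : Fin 2 ⊕ n) k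
  have hπ0 : π (.inl 0) = .inl 0 := swap_apply_of_ne_of_ne (by simp) hk0.symm
  let d := update (1 : Fin 2 ⊕ n → K) (.inl 1) (A (.inl 0) k)⁻¹
  refine ⟨(diagonal d)ᵀ * A.submatrix π π * diagonal d,
    (congruent_submatrix_perm A π).trans ⟨diagonal d, ?_, rfl⟩, ?_⟩
  · simp [d, det_diagonal, prod_update_of_mem, hk]
  · simp [d, hπ0, π, hk]

theorem exists_congruent_fromBlocks_J₂ {A : Matrix (Fin 2 ⊕ n) (Fin 2 ⊕ n) K} (hA : Aᵀ = -A)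
    (hdet : IsUnit A.det) : ∃ D, Congruent A (fromBlocks (J₂ K) 0 0 D) := by
  obtain ⟨B, hAB, h⟩ := exists_congruent_apply_eq_one hA hdet
  rw [eq_fromBlocks_J₂ (hAB.transpose_eq_neg hA) h] at hAB
  exact ⟨_, hAB.trans (congruent_fromBlocks_J₂ _ _)⟩

theorem congruent_pairJ {ι : Type*} [Fintype ι] [DecidableEq ι]
    {A : Matrix (ι × Fin 2) (ι × Fin 2) K} (hA : Aᵀ = -A) (hdet : IsUnit A.det) :
    Congruent A (pairJ ι K) := by
  refine Fintype.induction_empty_option (P := fun ι _ => ∀ [DecidableEq ι]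
    {A : Matrix (ι × Fin 2) (ι × Fin 2) K}, Aᵀ = -A → IsUnit A.det → Congruent A (pairJ ι K))
    ?_ ?_ ?_ ι hA hdet
  · intro α β _ e h _ A hA hdet
    classical
    let _ := Fintype.ofEquiv β e.symm
    let f : α × Fin 2 ≃ β × Fin 2 := prodCongr e (.refl _)
    refine congruent_of_submatrix f ?_
    rw [pairJ_submatrix_prodCongr]
    exact h (submatrix_transpose_eq_neg hA f) (by rwa [det_submatrix_equiv_self])
  · intro _ A _ _
    rw [Subsingleton.elim A (pairJ PEmpty K)]
    exact .refl _
  · intro κ _ ih _ A hA hdet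
    classical
    let e : Fin 2 ⊕ κ × Fin 2 ≃ Option κ × Fin 2 := optionProdEquiv.symm
    obtain ⟨D, hD⟩ := exists_congruent_fromBlocks_J₂ (submatrix_transpose_eq_neg hA e)
      (by rwa [det_submatrix_equiv_self])
    have hDskew : Dᵀ = -D := by
      have := hD.transpose_eq_neg (submatrix_transpose_eq_neg hA e)
      rw [fromBlocks_transpose, fromBlocks_neg, fromBlocks_inj] at this
      exact this.2.2.2
    have hDdet : IsUnit D.det := by
      simpa [det_fromBlocks_zero₂₁, det_J₂] using hD.isUnit_det (by rwa [det_submatrix_equiv_self])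
    refine congruent_of_submatrix e ?_
    rw [pairJ_option_submatrix]
    exact hD.trans (ih hDskew hDdet).fromBlocks_zero

theorem pfSum_sq {ι : Type*} [Fintype ι] [DecidableEq ι] {A : Matrix (ι × Fin 2) (ι × Fin 2) K}
    (hA : Aᵀ = -A) :
    pfSum A ^ 2 = (2 ^ Fintype.card ι * (Fintype.card ι).factorial) ^ 2 * A.det := by
  by_cases hdet : A.det = 0
  · rw [pfSum_eq_zero_of_det_eq_zero hA hdet, hdet]
    ring
  obtain ⟨U, -, hUA⟩ := congruent_pairJ hA (isUnit_iff_ne_zero.2 hdet)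
  have hpf := pfSum_transpose_mul_mul U A
  have hdetJ : (pairJ ι K).det = U.det ^ 2 * A.det := by
    rw [← hUA, det_mul, det_mul, det_transpose]
    ring
  rw [hUA, pfSum_pairJ] at hpf
  rw [det_pairJ] at hdetJ
  calc pfSum A ^ 2 = pfSum A ^ 2 * (U.det ^ 2 * A.det) := by rw [← hdetJ, mul_one]
    _ = (U.det * pfSum A) ^ 2 * A.det := by ring
    _ = _ := by rw [← hpf]

end Field

end Matrix

def finPairEquiv (N : ℕ) : Fin N × Fin 2 ≃ Fin (2 * N) :=
  finProdFinEquiv.trans (finCongr (Nat.mul_comm N 2))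

theorem finPairEquiv_apply_val (N : ℕ) (i : Fin N) (a : Fin 2) :
    (finPairEquiv N (i, a) : ℕ) = 2 * i + a := by
  simp [finPairEquiv, add_comm]

theorem pfaffian_eq_pfSum (N : ℕ) (A : Matrix (Fin (2 * N)) (Fin (2 * N)) ℂ) :
    pfaffian N A =
      (2 ^ N * N.factorial : ℂ)⁻¹ * pfSum (A.submatrix (finPairEquiv N) (finPairEquiv N)) := by
  rw [pfaffian, pfSum, one_div]
  congr 1
  refine Fintype.sum_equiv (permCongr (finPairEquiv N)).symm _ _ fun σ => ?_
  rw [permCongr_symm, Perm.sign_permCongr]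
  congr 1
  refine prod_congr rfl fun i _ => ?_
  simp only [submatrix_apply, permCongr_apply, symm_symm, apply_symm_apply]
  congr 2 <;> ext <;> simp [finPairEquiv_apply_val]

theorem pfaffian_sq (N : ℕ) {A : Matrix (Fin (2 * N)) (Fin (2 * N)) ℂ} (hA : Aᵀ = -A) :
    pfaffian N A ^ 2 = A.det := by
  rw [pfaffian_eq_pfSum, mul_pow, pfSum_sq (submatrix_transpose_eq_neg hA _),
    det_submatrix_equiv_self, Fintype.card_fin, ← mul_assoc, ← mul_pow,
    inv_mul_cancel₀ (by simp [Nat.factorial_ne_zero]), one_pow, one_mul]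

section L2OpNorm

open scoped Matrix.Norms.L2Operator

theorem opNorm_eq_l2_opNorm {m n : Type*} [Fintype m] [Fintype n] [DecidableEq n]
    (A : Matrix m n ℂ) : opNorm A = ‖A‖ :=
  rfl

theorem Matrix.norm_det_le_pow {n : Type*} [Fintype n] [DecidableEq n] (B : Matrix n n ℂ) :
    ‖B.det‖ ≤ ‖B‖ ^ Fintype.card n := by
  rcases isEmpty_or_nonempty n with hn | hn
  · simp
  have hroot : ∀ μ ∈ B.charpoly.roots, ‖μ‖₊ ≤ ‖B‖₊ := fun μ hμ => by
    exact_mod_cast spectrum.norm_le_norm_of_mem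
      (mem_spectrum_of_isRoot_charpoly (Polynomial.isRoot_of_mem_roots hμ))
  have hcard : B.charpoly.roots.card = Fintype.card n := by
    rw [← (IsAlgClosed.splits B.charpoly).natDegree_eq_card_roots, charpoly_natDegree_eq_dim]
  suffices ‖B.det‖₊ ≤ ‖B‖₊ ^ Fintype.card n by exact_mod_cast this
  calc ‖B.det‖₊ = (B.charpoly.roots.map (‖·‖₊)).prod := by
        rw [det_eq_prod_roots_charpoly]
        exact map_multiset_prod (nnnormHom : ℂ →*₀ NNReal) _
    _ ≤ ‖B‖₊ ^ (B.charpoly.roots.map (‖·‖₊)).card :=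
        Multiset.prod_le_pow_card _ _ (by simpa only [Multiset.forall_mem_map_iff] using hroot)
    _ = ‖B‖₊ ^ Fintype.card n := by rw [Multiset.card_map, hcard]

theorem Matrix.l2_opNorm_map_star_le {m n : Type*} [Fintype m] [Fintype n] [DecidableEq n]
    (A : Matrix m n ℂ) : ‖A.map star‖ ≤ ‖A‖ := by
  rw [l2_opNorm_def (A.map star)]
  refine ContinuousLinearMap.opNorm_le_bound _ (norm_nonneg _) fun x => ?_
  let y : EuclideanSpace ℂ n := WithLp.toLp 2 (star (WithLp.ofLp x))
  have hy : ‖y‖ = ‖x‖ := by simp [EuclideanSpace.norm_eq, y]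
  have hAy : ‖toEuclideanLin (A.map star) x‖ = ‖toEuclideanLin A y‖ := by
    simp only [EuclideanSpace.norm_eq, y]
    congr 2 with i
    rw [← Complex.norm_conj]
    simp [mulVec, dotProduct]
  calc ‖toEuclideanLin (A.map star) x‖ = ‖toEuclideanLin A y‖ := hAy
    _ ≤ ‖A‖ * ‖y‖ := l2_opNorm_mulVec A y
    _ = ‖A‖ * ‖x‖ := by rw [hy]

theorem Matrix.l2_opNorm_transpose_le {m n : Type*} [Fintype m] [Fintype n] [DecidableEq m]
    [DecidableEq n] (A : Matrix m n ℂ) : ‖Aᵀ‖ ≤ ‖A‖ := by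
  have : Aᵀ = (A.map star)ᴴ := by ext; simp
  rw [this, l2_opNorm_conjTranspose]
  exact l2_opNorm_map_star_le A

theorem sq_norm_sum_eq_sum_sq_norm_of_disjoint {ι α E : Type*} [Fintype ι]
    [SeminormedAddCommGroup E] {S : ι → Finset α} (hS : Pairwise (Disjoint on S)) (j : α)
    (f : ι → E) (hf : ∀ t, j ∉ S t → f t = 0) : ‖∑ t, f t‖ ^ 2 = ∑ t, ‖f t‖ ^ 2 := by
  by_cases h : ∃ t₀, j ∈ S t₀
  · obtain ⟨t₀, ht₀⟩ := h
    have hzero : ∀ t, t ≠ t₀ → f t = 0 := fun t ht =>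
      hf t (disjoint_left.1 (hS ht.symm) ht₀)
    rw [Fintype.sum_eq_single t₀ hzero, Fintype.sum_eq_single t₀ fun t ht => by simp [hzero t ht]]
  · simp only [not_exists] at h
    simp [hf _ (h _)]

theorem l2_opNorm_sum_le_one_of_supportedOn {ι : Type*} [Fintype ι] {M : ℕ}
    {W : ι → Matrix (Fin M) (Fin M) ℂ} {S : ι → Finset (Fin M)}
    (hsupp : ∀ t, SupportedOn (S t) (W t)) (hS : Pairwise (Disjoint on S))
    (hW : ∀ t, ‖W t‖ ≤ 1) : ‖∑ t, W t‖ ≤ 1 := by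
  rw [l2_opNorm_def]
  refine ContinuousLinearMap.opNorm_le_bound _ zero_le_one fun x => ?_
  let xt t : EuclideanSpace ℂ (Fin M) := WithLp.toLp 2 fun j => if j ∈ S t then x j else 0
  have hWx : ∀ t, W t *ᵥ x = W t *ᵥ xt t := fun t => by
    funext i
    simp only [mulVec, dotProduct]
    refine sum_congr rfl fun j _ => ?_
    by_cases hj : j ∈ S t
    · simp [xt, hj]
    · simp [xt, hj, hsupp t i j (.inr hj)]
  have hrow : ∀ t i, i ∉ S t → (W t *ᵥ x) i = 0 := fun t i hi => by
    simp [mulVec, dotProduct, hsupp t i _ (.inl hi)]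
  rw [one_mul, ← sq_le_sq₀ (norm_nonneg _) (norm_nonneg _)]
  calc ‖toEuclideanLin (∑ t, W t) x‖ ^ 2 = ∑ i, ‖∑ t, (W t *ᵥ x) i‖ ^ 2 := by
        simp [EuclideanSpace.norm_sq_eq]
    _ = ∑ t, ‖toEuclideanLin (W t) (xt t)‖ ^ 2 := by
        simp_rw [sq_norm_sum_eq_sum_sq_norm_of_disjoint hS _ _ (hrow · _),
          EuclideanSpace.norm_sq_eq, hWx]
        exact sum_comm
    _ ≤ ∑ t, ‖xt t‖ ^ 2 := by
        gcongr with t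
        exact (l2_opNorm_mulVec (W t) (xt t)).trans (mul_le_of_le_one_left (norm_nonneg _) (hW t))
    _ = ∑ j ∈ univ.biUnion S, ‖x j‖ ^ 2 := by
        rw [sum_biUnion fun t _ t' _ h => hS h]
        simp [EuclideanSpace.norm_sq_eq, xt, apply_ite, sum_ite_mem]
    _ ≤ ‖x‖ ^ 2 := by
        rw [EuclideanSpace.norm_sq_eq]
        exact sum_le_univ_sum_of_nonneg fun _ => by positivity

end L2OpNorm

open scoped Matrix.Norms.L2Operator in
/-- if `W_1,…,W_N` are `M×M` skew-symmetric matrices supported on mutually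
disjoint blocks with `‖W_t‖_op ≤ 1`, and `‖X‖_op ≤ L` with `X` of size `M × 2N`, then for
every sign vector `b ∈ {±1}^N`, `|pf(Xᵀ (∑ b_t W_t) X)| ≤ L^{2N}`. -/
theorem pfaffian_bound_disjoint_blocks (M N : ℕ) (L : ℝ)
    (W : Fin N → Matrix (Fin M) (Fin M) ℂ) (S : Fin N → Finset (Fin M))
    (hsupp : ∀ t, SupportedOn (S t) (W t))
    (hdisj : ∀ t t', t ≠ t' → Disjoint (S t) (S t'))
    (hskew : ∀ t, (W t)ᵀ = -(W t))
    (hWnorm : ∀ t, opNorm (W t) ≤ 1)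
    (X : Matrix (Fin M) (Fin (2 * N)) ℂ) (hX : opNorm X ≤ L)
    (b : Fin N → ℝ) (hb : ∀ t, b t = 1 ∨ b t = -1) :
    ‖pfaffian N (Xᵀ * (∑ t : Fin N, (b t : ℂ) • W t) * X)‖ ≤ L ^ (2 * N) := by
  set B := ∑ t : Fin N, (b t : ℂ) • W t
  rw [opNorm_eq_l2_opNorm] at hX
  have hL : 0 ≤ L := (norm_nonneg X).trans hX
  have hB : ‖B‖ ≤ 1 := l2_opNorm_sum_le_one_of_supportedOn
    (fun t i j hij => by simp [hsupp t i j hij]) (fun t t' => hdisj t t') fun t => by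
      rw [norm_smul, ← opNorm_eq_l2_opNorm]
      rcases hb t with h | h <;> simp [h, hWnorm t]
  have hBskew : Bᵀ = -B := by simp [B, transpose_sum, hskew]
  have hA : ‖Xᵀ * B * X‖ ≤ L ^ 2 := calc
    ‖Xᵀ * B * X‖ ≤ ‖Xᵀ‖ * ‖B‖ * ‖X‖ :=
      (l2_opNorm_mul _ _).trans (by gcongr; exact l2_opNorm_mul _ _)
    _ ≤ L * 1 * L := by gcongr; exact (l2_opNorm_transpose_le X).trans hX
    _ = L ^ 2 := by ring
  refine le_of_pow_le_pow_left₀ two_ne_zero (by positivity) ?_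
  calc ‖pfaffian N (Xᵀ * B * X)‖ ^ 2 = ‖(Xᵀ * B * X).det‖ := by
        rw [← norm_pow, pfaffian_sq N (transpose_mul_mul_eq_neg hBskew X)]
    _ ≤ ‖Xᵀ * B * X‖ ^ (2 * N) := by simpa using norm_det_le_pow (Xᵀ * B * X)
    _ ≤ (L ^ 2) ^ (2 * N) := by gcongr
    _ = (L ^ (2 * N)) ^ 2 := by ring
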